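/- Let T be a real random variable with continuous CDF F_T and let a, b, c, d, e, f ∈ ℝ with F_T(e) < F_T(f). Define γ¹ = min(F_T(a), F_T(b), F_T(c), F_T(f)) − max(F_T(d), F_T(e)), γ² = min(F_T(a), F_T(b), F_T(f)) − max(F_T(d), F_T(e), F_T(c)), γ³ and γ⁴ analogously for the other two components, and δ = F_T(f) − F_T(e). Then max(γ¹, 0) + max(γ², 0) + max(γ³, 0) + max(γ⁴, 0) need not be computed separately: in the comonotone representation, the four identified path-specific PNS quantities sum to max(min(F_T(a), F_T(f)) − max(F_T(d), F_T(e)), 0)/δ, which equals the identified total PNS P(T ≥ d, T < a | e ≤ T < f). (Consistency of the identification formulas with the decomposition of Proposition 3.1.) -/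

import Mathlib

/-! The four path-specific quantities are the `F_T`-lengths of a partition of the interval
`[max d e, min a f)`: cut it at `b`, then cut the lower piece at `c` and the upper one at `b'`.
Since `F_T` is continuous, the law of `T` has no atoms, so `F_T`-length is its mass on half-open
intervals, and dividing by `F_T f - F_T e` gives the conditional probability. -/

open MeasureTheory ProbabilityTheory Set

theorem max_min_sub_zero_add_max_sub_max_zero {α : Type*} [AddCommGroup α] [LinearOrder α]
    [IsOrderedAddMonoid α] (p q x : α) :
    max (min p x - q) 0 + max (p - max q x) 0 = max (p - q) 0 := by
  rcases le_total x q with hxq | hqx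
  · rw [max_eq_right (sub_nonpos.2 ((min_le_right p x).trans hxq)), max_eq_left hxq, zero_add]
  rcases le_total p x with hpx | hxp
  · rw [min_eq_left hpx, max_eq_right hqx, max_eq_right (sub_nonpos.2 hpx), add_zero]
  · rw [min_eq_right hxp, max_eq_right hqx, max_eq_left (sub_nonneg.2 hqx),
      max_eq_left (sub_nonneg.2 hxp), max_eq_left (sub_nonneg.2 (hqx.trans hxp)),
      sub_add_sub_cancel']

theorem path_specific_sum_eq_total {α : Type*} [AddCommGroup α] [LinearOrder α]
    [IsOrderedAddMonoid α] (A B C B' D E F : α) :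
    max (min (min (min A B) C) F - max D E) 0
      + max (min (min A B) F - max (max D E) C) 0
      + max (min (min A F) B' - max (max D E) B) 0
      + max (min A F - max (max (max D B) E) B') 0
    = max (min A F - max D E) 0 := by
  rw [← max_min_sub_zero_add_max_sub_max_zero (min A F) (max D E) B,
    ← max_min_sub_zero_add_max_sub_max_zero (min (min A F) B) (max D E) C,
    ← max_min_sub_zero_add_max_sub_max_zero (min A F) (max (max D E) B) B',
    min_right_comm A B F, min_right_comm (min A B) C F, min_right_comm A B F,
    max_right_comm D B E]
  abel

theorem measure_Ico_eq_ofReal_cdf {ν : Measure ℝ} [IsProbabilityMeasure ν]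
    (hν : Continuous (cdf ν)) (x y : ℝ) :
    ν (Ico x y) = ENNReal.ofReal (cdf ν y - cdf ν x) := by
  have hleft : ∀ t, Function.leftLim (cdf ν) t = cdf ν t := fun t =>
    (monotone_cdf ν).continuousWithinAt_Iio_iff_leftLim_eq.1 hν.continuousWithinAt
  rw [← measure_cdf ν, StieltjesFunction.measure_Ico, hleft, hleft, measure_cdf]

theorem toReal_cond_Ico_Ico {ν : Measure ℝ} [IsProbabilityMeasure ν]
    (hν : Continuous (cdf ν)) (a d e f : ℝ) :
    (ν[|Ico e f] (Ico d a)).toReal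
      = max (min (cdf ν a) (cdf ν f) - max (cdf ν d) (cdf ν e)) 0 / (cdf ν f - cdf ν e) := by
  rw [cond_apply measurableSet_Ico, Ico_inter_Ico, ENNReal.toReal_mul, ENNReal.toReal_inv,
    measure_Ico_eq_ofReal_cdf hν, measure_Ico_eq_ofReal_cdf hν, ENNReal.toReal_ofReal',
    ENNReal.toReal_ofReal', (monotone_cdf ν).map_min, (monotone_cdf ν).map_max,
    min_comm (cdf ν f), max_comm (cdf ν e), inv_mul_eq_div]
  rcases le_total (cdf ν e) (cdf ν f) with hef | hfe
  · rw [max_eq_left (sub_nonneg.2 hef)]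
  · have hempty : min (cdf ν a) (cdf ν f) - max (cdf ν d) (cdf ν e) ≤ 0 :=
      sub_nonpos.2 ((min_le_right _ _).trans (hfe.trans (le_max_right _ _)))
    rw [max_eq_right hempty, zero_div, zero_div]

theorem cdf_map_apply {Ω : Type*} [MeasurableSpace Ω] (μ : Measure Ω) [IsProbabilityMeasure μ]
    {T : Ω → ℝ} (hT : Measurable T) (t : ℝ) :
    cdf (μ.map T) t = (μ {ω | T ω ≤ t}).toReal := by
  have := Measure.isProbabilityMeasure_map (μ := μ) hT.aemeasurable
  rw [cdf_eq_real, measureReal_def, Measure.map_apply hT measurableSet_Iic]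
  rfl

theorem cond_preimage_apply {Ω α : Type*} [MeasurableSpace Ω] [MeasurableSpace α]
    (μ : Measure Ω) {T : Ω → α} (hT : Measurable T) {s t : Set α} (hs : MeasurableSet s)
    (ht : MeasurableSet t) :
    μ[|T ⁻¹' s] (T ⁻¹' t) = (μ.map T)[|s] t := by
  rw [cond_apply (hT hs), cond_apply hs, ← preimage_inter, Measure.map_apply hT hs,
    Measure.map_apply hT (hs.inter ht)]

theorem stmt13_general {Ω : Type*} [MeasurableSpace Ω] (μ : Measure Ω) [IsProbabilityMeasure μ]
    (T : Ω → ℝ) (hT : Measurable T) (F : ℝ → ℝ)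
    (hF : ∀ t, F t = (μ {ω | T ω ≤ t}).toReal) (hFc : Continuous F)
    (a b c b' d e f : ℝ) :
    (max (min (min (min (F a) (F b)) (F c)) (F f) - max (F d) (F e)) 0
      + max (min (min (F a) (F b)) (F f) - max (max (F d) (F e)) (F c)) 0
      + max (min (min (F a) (F f)) (F b') - max (max (F d) (F e)) (F b)) 0
      + max (min (F a) (F f) - max (max (max (F d) (F b)) (F e)) (F b')) 0)
        / (F f - F e)
      = max (min (F a) (F f) - max (F d) (F e)) 0 / (F f - F e)
    ∧ max (min (F a) (F f) - max (F d) (F e)) 0 / (F f - F e)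
      = ((μ[|{ω | e ≤ T ω ∧ T ω < f}]) {ω | d ≤ T ω ∧ T ω < a}).toReal := by
  refine ⟨by rw [path_specific_sum_eq_total], ?_⟩
  obtain rfl : F = cdf (μ.map T) := funext fun t => by rw [hF, cdf_map_apply μ hT]
  have := Measure.isProbabilityMeasure_map (μ := μ) hT.aemeasurable
  change _ = (μ[|T ⁻¹' Ico e f] (T ⁻¹' Ico d a)).toReal
  rw [cond_preimage_apply μ hT measurableSet_Ico measurableSet_Ico, toReal_cond_Ico_Ico hFc]

/-- Consistency of the identification formulas with the decomposition of Proposition 3.1: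
the four identified path-specific PNS quantities sum to the identified total PNS. -/
theorem stmt13 {Ω : Type*} [MeasurableSpace Ω] (μ : Measure Ω) [IsProbabilityMeasure μ]
    (T : Ω → ℝ) (hT : Measurable T) (F : ℝ → ℝ)
    (hF : ∀ t, F t = (μ {ω | T ω ≤ t}).toReal) (hFc : Continuous F)
    (a b c b' d e f : ℝ) (hef : F e < F f) :
    (max (min (min (min (F a) (F b)) (F c)) (F f) - max (F d) (F e)) 0
      + max (min (min (F a) (F b)) (F f) - max (max (F d) (F e)) (F c)) 0
      + max (min (min (F a) (F f)) (F b') - max (max (F d) (F e)) (F b)) 0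
      + max (min (F a) (F f) - max (max (max (F d) (F b)) (F e)) (F b')) 0)
        / (F f - F e)
      = max (min (F a) (F f) - max (F d) (F e)) 0 / (F f - F e)
    ∧ max (min (F a) (F f) - max (F d) (F e)) 0 / (F f - F e)
      = ((μ[|{ω | e ≤ T ω ∧ T ω < f}]) {ω | d ≤ T ω ∧ T ω < a}).toReal :=
  stmt13_general μ T hT F hF hFc a b c b' d e f
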